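/- arXiv:2506.01650 — 2 statements merged into one kernel-verified Lean document; each statement's English description precedes it below -/
import Mathlib

section
/- Let f, g : ℝ → ℝ be differentiable, G : ℝ → ℝ a differentiable CDF with density G', c ∈ ℝ, and define h(x) = G(f(x)-g(x)-c)·f(x) + ∫_{f(x)-g(x)-c}^∞ (y + g(x) + c) dG(y). Then h'(x) = G(f(x)-g(x)-c)·f'(x) + (1 - G(f(x)-g(x)-c))·g'(x). -/
/-!
With `Φ s = ∫_{(s, ∞)} y dμ` and `a = f - g - c`, splitting off the constant part of the
integrand gives `h = G(a) f + Φ(a) + (g + c)(1 - G(a))`, so everything reduces to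
`Φ'(t) = -t G'(t)`. This holds because for `s` near `t`,
`Φ s - Φ t + t (G s - G t) = -∫_{(t, s]} (y - t) dμ` is bounded by `|s - t| |G s - G t|`,
which is `o(s - t)` by continuity of `G`. In `h'` the terms `a' G'(a) f`, `a' Φ'(a)` and
`-(g + c) a' G'(a)` then sum to `a' G'(a) (f - a - g - c) = 0`, as in the envelope theorem.
-/

open MeasureTheory Set Filter Topology Asymptotics

section TailMoment

variable {μ : Measure ℝ}

lemma setIntegral_Ioi_sub_setIntegral_Ioi (hμ : Integrable (fun y : ℝ => y) μ) {a b : ℝ}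
    (hab : a ≤ b) : ∫ y in Ioi a, y ∂μ - ∫ y in Ioi b, y ∂μ = ∫ y in Ioc a b, y ∂μ := by
  rw [← Ioc_union_Ioi_eq_Ioi hab, setIntegral_union (Ioc_disjoint_Ioi le_rfl) measurableSet_Ioi
    hμ.integrableOn hμ.integrableOn, add_sub_cancel_right]

variable [IsFiniteMeasure μ]

lemma measureReal_Iic_sub_measureReal_Iic {a b : ℝ} (hab : a ≤ b) :
    μ.real (Iic b) - μ.real (Iic a) = μ.real (Ioc a b) := by
  rw [← Iic_union_Ioc_eq_Iic hab, measureReal_union (Iic_disjoint_Ioc le_rfl) measurableSet_Ioc,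
    add_sub_cancel_left]

lemma abs_setIntegral_Ioi_sub_add_le (hμ : Integrable (fun y : ℝ => y) μ) {a b t : ℝ}
    (ht : t ∈ uIcc a b) :
    |∫ y in Ioi b, y ∂μ - ∫ y in Ioi a, y ∂μ + t * (μ.real (Iic b) - μ.real (Iic a))|
      ≤ |b - a| * |μ.real (Iic b) - μ.real (Iic a)| := by
  wlog hab : a ≤ b generalizing a b
  · convert this (uIcc_comm a b ▸ ht) (le_of_not_ge hab) using 1
    · rw [← abs_neg]; ring_nf
    · rw [abs_sub_comm a b, abs_sub_comm (μ.real (Iic a))]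
  rw [uIcc_of_le hab] at ht
  have hrepr : ∫ y in Ioi b, y ∂μ - ∫ y in Ioi a, y ∂μ + t * (μ.real (Iic b) - μ.real (Iic a))
      = -∫ y in Ioc a b, (y - t) ∂μ := by
    rw [integral_sub hμ.integrableOn (integrableOn_const (measure_ne_top μ _)), setIntegral_const,
      smul_eq_mul, ← setIntegral_Ioi_sub_setIntegral_Ioi hμ hab,
      measureReal_Iic_sub_measureReal_Iic hab]
    ring
  rw [hrepr, abs_neg, abs_of_nonneg (sub_nonneg.2 hab), measureReal_Iic_sub_measureReal_Iic hab,
    abs_of_nonneg measureReal_nonneg, ← Real.norm_eq_abs]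
  refine norm_setIntegral_le_of_norm_le_const (measure_lt_top μ _) fun y hy => ?_
  rw [Real.norm_eq_abs, abs_le]
  constructor <;> linarith [hy.1, hy.2, ht.1, ht.2]

lemma setIntegral_Ioi_add_const (hμ : Integrable (fun y : ℝ => y) μ) (t A : ℝ) :
    ∫ y in Ioi t, (y + A) ∂μ = ∫ y in Ioi t, y ∂μ + A * μ.real (Ioi t) := by
  rw [integral_add hμ.integrableOn (integrableOn_const (measure_ne_top μ _)), setIntegral_const,
    smul_eq_mul, mul_comm]

theorem hasDerivAt_setIntegral_Ioi_id (hμ : Integrable (fun y : ℝ => y) μ) {G : ℝ → ℝ}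
    (hcdf : ∀ s, G s = μ.real (Iic s)) {G' t : ℝ} (hG : HasDerivAt G G' t) :
    HasDerivAt (fun s => ∫ y in Ioi s, y ∂μ) (-(t * G')) t := by
  obtain rfl : G = fun s => μ.real (Iic s) := funext hcdf
  have hF : HasDerivAt (fun s => ∫ y in Ioi s, y ∂μ + t * μ.real (Iic s)) 0 t := by
    rw [hasDerivAt_iff_isLittleO]
    have hGo : (fun s => μ.real (Iic s) - μ.real (Iic t)) =o[𝓝 t] (fun _ => (1 : ℝ)) :=
      (isLittleO_one_iff ℝ).2 (by simpa using hG.continuousAt.sub_const (μ.real (Iic t)))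
    refine IsBigO.trans_isLittleO ?_
      (by simpa using (isBigO_refl (fun s => s - t) _).mul_isLittleO hGo)
    refine IsBigO.of_bound 1 (Eventually.of_forall fun s => ?_)
    convert abs_setIntegral_Ioi_sub_add_le hμ (left_mem_uIcc : t ∈ uIcc t s) using 1
    · rw [smul_zero, sub_zero, Real.norm_eq_abs]; ring_nf
    · rw [one_mul, Real.norm_eq_abs, abs_mul]
  simpa [Pi.sub_def] using hF.sub (hG.const_mul t)

end TailMoment

/-- Envelope-theorem special case (Lemma A.1): with `G` the CDF of a probability
measure `μ` with finite first moment, the function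
`h x = G (f x - g x - c) * f x + ∫_{(f x - g x - c, ∞)} (y + g x + c) dμ(y)`
has derivative `G (f x - g x - c) * f' x + (1 - G (f x - g x - c)) * g' x`. -/
theorem stmt_0
    (f g G f' g' : ℝ → ℝ) (μ : Measure ℝ) [IsProbabilityMeasure μ]
    (hf : ∀ x, HasDerivAt f (f' x) x)
    (hg : ∀ x, HasDerivAt g (g' x) x)
    (hG : Differentiable ℝ G)
    (hcdf : ∀ t, G t = (μ (Iic t)).toReal)
    (hmoment : Integrable (fun y : ℝ => y) μ)
    (c : ℝ) (h : ℝ → ℝ)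
    (hh : ∀ x, h x = G (f x - g x - c) * f x
      + ∫ y in Ioi (f x - g x - c), (y + g x + c) ∂μ)
    (x : ℝ) :
    HasDerivAt h (G (f x - g x - c) * f' x + (1 - G (f x - g x - c)) * g' x) x := by
  have hrepr : h = fun z => G (f z - g z - c) * f z
      + (∫ y in Ioi (f z - g z - c), y ∂μ + (g z + c) * (1 - G (f z - g z - c))) := by
    funext z
    simp_rw [hh z, add_assoc, setIntegral_Ioi_add_const hmoment, ← compl_Iic,
      probReal_compl_eq_one_sub measurableSet_Iic, hcdf, measureReal_def]
  have ha : HasDerivAt (fun z => f z - g z - c) (f' x - g' x) x := ((hf x).sub (hg x)).sub_const c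
  have hGa := (hG _).hasDerivAt.comp x ha
  have hΦa := (hasDerivAt_setIntegral_Ioi_id hmoment hcdf (hG _).hasDerivAt).comp x ha
  have hgc := (hg x).add_const c
  rw [hrepr]
  exact ((hGa.mul (hf x)).add (hΦa.add (hgc.mul ((hasDerivAt_const x 1).sub hGa)))).congr_deriv
    (by simp only [Function.comp_apply, Pi.sub_apply]; ring)
end

section
/- Let G be a strictly increasing differentiable CDF on ℝ with density G' > 0, let κ ≥ 0, and define G̃(x) = G(x + κ). For fixed bid b with 1 - G̃(b) > 0 and fixed markup term m, consider the cost c implicitly defined by F(c, κ) = b - c - [(1 - G̃(b))κ + ∫_{c-κ}^{b} (π̃ - c + κ) dG̃(π̃)]/G̃(b) - m = 0. Then dc/dκ = -[1 - G̃(b) + ∫_{c-κ}^{b} G̃'(π̃) dπ̃]/G̃(c-κ) < 0, i.e., the inverted cost is strictly decreasing in the penalty κ. -/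
open intervalIntegral

/-- Partial identification: the cost `c(κ)` that rationalizes a fixed bid `b`
through the bidding first-order condition is strictly decreasing in the
penalty `κ`, with derivative
`-(1 - G̃(b) + ∫_{c-κ}^{b} G̃') / G̃(c-κ) < 0`. -/
theorem stmt_8
    (Gt Gt' : ℝ → ℝ)
    (hmono : StrictMono Gt)
    (hderiv : ∀ x, HasDerivAt Gt (Gt' x) x)
    (hdens : ∀ x, 0 < Gt' x)
    (hcdf0 : ∀ x, 0 ≤ Gt x) (hcdf1 : ∀ x, Gt x ≤ 1)
    (b m : ℝ)
    (hb : 0 < 1 - Gt b)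
    (cfun c' : ℝ → ℝ)
    (hcdiff : ∀ q, HasDerivAt cfun (c' q) q)
    (hFOC : ∀ q, 0 ≤ q →
      b - cfun q -
        ((1 - Gt b) * q + ∫ x in (cfun q - q)..b, (x - cfun q + q) * Gt' x) / Gt b
        - m = 0)
    (κ : ℝ) (hκ : 0 ≤ κ)
    (hGc : 0 < Gt (cfun κ - κ)) :
    c' κ = -(1 - Gt b + ∫ x in (cfun κ - κ)..b, Gt' x) / Gt (cfun κ - κ) ∧
      c' κ < 0 := by
  have hcont : Continuous Gt := by
    refine continuous_iff_continuousAt.2 fun x => (hderiv x).continuousAt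
  -- Gt' is interval integrable (nonnegative derivative)
  have hint : ∀ u v : ℝ, IntervalIntegrable Gt' MeasureTheory.volume u v := fun u v =>
    intervalIntegrable_deriv_of_nonneg hcont.continuousOn (fun x _ => hderiv x)
      (fun x _ => (hdens x).le)
  have hFTC : ∀ u v : ℝ, (∫ x in u..v, Gt' x) = Gt v - Gt u := fun u v =>
    integral_eq_sub_of_hasDerivAt (fun x _ => hderiv x) (hint u v)
  have hGtInt : ∀ u v : ℝ, IntervalIntegrable Gt MeasureTheory.volume u v := fun u v =>
    hcont.intervalIntegrable u v
  -- Gt b > 0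
  have hGb : 0 < Gt b := lt_of_le_of_lt (hcdf0 (b - 1)) (hmono (by linarith))
  -- integration by parts applied to the FOC
  have hparts : ∀ q : ℝ,
      (∫ x in (cfun q - q)..b, (x - cfun q + q) * Gt' x)
        = (b - cfun q + q) * Gt b - ∫ x in (cfun q - q)..b, Gt x := by
    intro q
    have h := intervalIntegral.integral_mul_deriv_eq_deriv_mul
      (u := fun x => x - cfun q + q) (u' := fun _ => (1 : ℝ)) (v := Gt) (v' := Gt')
      (a := cfun q - q) (b := b)
      (fun x _ => ((hasDerivAt_id x).sub_const _).add_const _)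
      (fun x _ => hderiv x) intervalIntegrable_const (hint _ _)
    simpa using h
  -- the simplified FOC : ∫_{c(q)-q}^b Gt - q - m * Gt b = 0 for q ≥ 0
  have hΦ : ∀ q, 0 ≤ q → (∫ x in (cfun q - q)..b, Gt x) - q - m * Gt b = 0 := by
    intro q hq
    have h := hFOC q hq
    rw [hparts q] at h
    have h2 : (b - cfun q - m) * Gt b
        = (1 - Gt b) * q + ((b - cfun q + q) * Gt b - ∫ x in (cfun q - q)..b, Gt x) := by
      have h3 : b - cfun q - m
          = ((1 - Gt b) * q + ((b - cfun q + q) * Gt b - ∫ x in (cfun q - q)..b, Gt x)) / Gt b := by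
        linarith
      rw [h3, div_mul_cancel₀ _ hGb.ne']
    nlinarith [h2]
  -- derivative of the simplified FOC at κ
  set a : ℝ := cfun κ - κ with ha
  have hψ : HasDerivAt (fun u => ∫ x in u..b, Gt x) (-Gt a) a :=
    intervalIntegral.integral_hasDerivAt_left (hGtInt a b)
      hcont.stronglyMeasurable.stronglyMeasurableAtFilter hcont.continuousAt
  have hinner : HasDerivAt (fun q => cfun q - q) (c' κ - 1) κ :=
    (hcdiff κ).sub (hasDerivAt_id κ)
  have hΦd : HasDerivAt (fun q => (∫ x in (cfun q - q)..b, Gt x) - q - m * Gt b)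
      (-Gt a * (c' κ - 1) - 1) κ := by
    have := (hψ.comp κ hinner).sub (hasDerivAt_id κ)
    simpa using this.sub_const (m * Gt b)
  -- one-sided uniqueness of the derivative on Ici κ
  have heq : (fun q => (∫ x in (cfun q - q)..b, Gt x) - q - m * Gt b)
      =ᶠ[nhdsWithin κ (Set.Ici κ)] fun _ => (0 : ℝ) := by
    filter_upwards [self_mem_nhdsWithin] with q hq
    exact hΦ q (le_trans hκ hq)
  have hzero : HasDerivWithinAt (fun q => (∫ x in (cfun q - q)..b, Gt x) - q - m * Gt b)
      0 (Set.Ici κ) κ := by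
    refine (hasDerivWithinAt_const κ (Set.Ici κ) (0 : ℝ)).congr_of_eventuallyEq heq ?_
    exact hΦ κ hκ
  have hD : -Gt a * (c' κ - 1) - 1 = 0 := by
    have h1 := (hΦd.hasDerivWithinAt (s := Set.Ici κ)).derivWithin (uniqueDiffOn_Ici κ κ Set.self_mem_Ici)
    have h2 := hzero.derivWithin (uniqueDiffOn_Ici κ κ Set.self_mem_Ici)
    rw [h1] at h2
    exact h2
  -- solve for c' κ
  have hc' : c' κ = (Gt a - 1) / Gt a := by
    field_simp
    nlinarith [hD]
  have hGa1 : Gt a < 1 := lt_of_lt_of_le (hmono (lt_add_one a)) (hcdf1 (a + 1))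
  constructor
  · rw [hc', hFTC a b]
    congr 1
    ring
  · rw [hc']
    exact div_neg_of_neg_of_pos (by linarith) hGc
end
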